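/- For every R > 0: (𝔅_μ + ℭ_ν) ∩ B′′_R ⊆ (𝔅_μ ∩ B′′_R) + (ℭ_ν ∩ B′′_R), and (𝔅_μ + ℭ_ν + N) ∩ B′′_R ⊆ (𝔅_μ ∩ B′′_{3R}) + (ℭ_ν ∩ B′′_{3R}) + (N ∩ B′′_{7R}), where B′′_R denotes the closed ball of radius R centered at the origin in C_b(Ω)′′ and N := {a ∈ C_b(Ω)′′ : a ≤ 0}. -/

import Mathlib

open MeasureTheory BoundedContinuousFunction NormedSpace Pointwise

noncomputable section

variable {d : ℕ}

/-- Extension `h ↦ h ⊕ 0` as a continuous linear map `C_b(X) → C_b(Ω)`. -/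
def extX {X Y : Set (EuclideanSpace ℝ (Fin d))} :
    (↥X →ᵇ ℝ) →L[ℝ] ((↥X × ↥Y) →ᵇ ℝ) :=
  LinearMap.mkContinuous
    { toFun := fun h => h.compContinuous (ContinuousMap.fst)
      map_add' := fun h₁ h₂ => by ext z; simp [compContinuous_apply]
      map_smul' := fun c h => by ext z; simp [compContinuous_apply] }
    1 (fun h => by simpa using h.norm_compContinuous_le (ContinuousMap.fst))

/-- Extension `g ↦ 0 ⊕ g` as a continuous linear map `C_b(Y) → C_b(Ω)`. -/
def extY {X Y : Set (EuclideanSpace ℝ (Fin d))} :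
    (↥Y →ᵇ ℝ) →L[ℝ] ((↥X × ↥Y) →ᵇ ℝ) :=
  LinearMap.mkContinuous
    { toFun := fun g => g.compContinuous (ContinuousMap.snd)
      map_add' := fun h₁ h₂ => by ext z; simp [compContinuous_apply]
      map_smul' := fun c h => by ext z; simp [compContinuous_apply] }
    1 (fun g => by simpa using g.norm_compContinuous_le (ContinuousMap.snd))

/-- A finite Borel measure, as a continuous linear functional on bounded
continuous functions. -/
def integrationCLM {Z : Type*} [TopologicalSpace Z] [MeasurableSpace Z]
    [OpensMeasurableSpace Z] (μ : Measure Z) [IsFiniteMeasure μ] : StrongDual ℝ (Z →ᵇ ℝ) :=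
  LinearMap.mkContinuous
    { toFun := fun h => ∫ x, h x ∂μ
      map_add' := fun h g => integral_add (h.integrable μ) (g.integrable μ)
      map_smul' := fun c h => by simpa using integral_smul c (fun x => h x) }
    (μ Set.univ).toReal
    (fun h => h.norm_integral_le_mul_norm μ)

/-- Direct instances for `Z →ᵇ ℝ` (instance search needs them in nested problems). -/
instance bcfRealSeminormedAddCommGroup {Z : Type*} [TopologicalSpace Z] :
    SeminormedAddCommGroup (Z →ᵇ ℝ) :=
  BoundedContinuousFunction.instSeminormedAddCommGroup

instance bcfRealNormedSpace {Z : Type*} [TopologicalSpace Z] : NormedSpace ℝ (Z →ᵇ ℝ) :=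
  BoundedContinuousFunction.instNormedSpace

/-- The set `𝔅_μ ⊆ C_b(Ω)′′` of elements of the form `b ⊕ 0` with `b(μ) = 0`. -/
def Bmu (X Y : Set (EuclideanSpace ℝ (Fin d))) (μ : Measure ↥X) [IsFiniteMeasure μ] :
    Set (StrongDual ℝ (StrongDual ℝ ((↥X × ↥Y) →ᵇ ℝ))) :=
  {a | ∃ b : StrongDual ℝ (StrongDual ℝ (↥X →ᵇ ℝ)),
    (∀ η : StrongDual ℝ ((↥X × ↥Y) →ᵇ ℝ), a η = b (η.comp extX)) ∧
    b (integrationCLM μ) = 0}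

/-- The set `ℭ_ν ⊆ C_b(Ω)′′` of elements of the form `0 ⊕ c` with `c(ν) = 0`. -/
def Cnu (X Y : Set (EuclideanSpace ℝ (Fin d))) (ν : Measure ↥Y) [IsFiniteMeasure ν] :
    Set (StrongDual ℝ (StrongDual ℝ ((↥X × ↥Y) →ᵇ ℝ))) :=
  {a | ∃ c : StrongDual ℝ (StrongDual ℝ (↥Y →ᵇ ℝ)),
    (∀ η : StrongDual ℝ ((↥X × ↥Y) →ᵇ ℝ), a η = c (η.comp extY)) ∧
    c (integrationCLM ν) = 0}

/-- The nonpositive elements of the bidual `C_b(Ω)′′`. -/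
def Nneg (X Y : Set (EuclideanSpace ℝ (Fin d))) :
    Set (StrongDual ℝ (StrongDual ℝ ((↥X × ↥Y) →ᵇ ℝ))) :=
  {a | ∀ η : StrongDual ℝ ((↥X × ↥Y) →ᵇ ℝ),
    (∀ f : (↥X × ↥Y) →ᵇ ℝ, 0 ≤ f → 0 ≤ η f) → a η ≤ 0}

/-!
Write `a = b ⊕ c (+ n)` with `b μ = 0`, `c ν = 0` (and `n ≤ 0`). The lift `ξ ↦ ξ ∘ P_ν`, with
`P_ν f x = ∫ f (x, y) dν(y)`, is a positive contraction with marginals `ξ` and `ξ 1 • ν`, and `c`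
vanishes on the latter; hence `b ξ = a (ξ ∘ P_ν)` and `‖b ⊕ 0‖ ≤ ‖a‖`. With the same bound for `c`
this is the first inclusion.

For the second, `n ≤ 0` gives `a ≤ b ⊕ c` on positive functionals. The function
`ψ ζ = sup {a η - b η_x | η ≥ 0, η_y = ζ}` is additive on positive functionals (marginals have the
Riesz decomposition property), positively homogeneous, between `-R ζ 1` and `2 R ζ 1`, and
`ψ ν ≤ 0`. Splitting `ρ` and `t ν` along their meet gives `ψ ρ ≤ 2 R ‖ρ - t ν‖`, so the
Mazur–Orlicz theorem yields `c' ≥ ψ` with `‖c'‖ ≤ 2 R` and `c' ν = 0`, whence `a ≤ b ⊕ c'`.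
Exchanging the roles of `X` and `Y` replaces `b` by some `b'` in the same way, and the remainder
`a - b' ⊕ c'` is `≤ 0` of norm at most `R + 2 R + 2 R`.
-/

section Sandwich

variable {E F : Type*} [AddCommGroup E] [Module ℝ E] [AddCommGroup F] [Module ℝ F]

lemma exists_linearMap_le_of_sublinear {q : F → ℝ} (hq_add : ∀ x y, q (x + y) ≤ q x + q y)
    (hq_smul : ∀ c : ℝ, 0 < c → ∀ y, q (c • y) ≤ c * q y) : ∃ g : F →ₗ[ℝ] ℝ, ∀ y, g y ≤ q y := by
  have hq_smul' : ∀ c : ℝ, 0 < c → ∀ y, q (c • y) = c * q y := by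
    refine fun c hc y => le_antisymm (hq_smul c hc y) ?_
    have := hq_smul c⁻¹ (inv_pos.2 hc) (c • y)
    rw [inv_smul_smul₀ hc.ne'] at this
    calc c * q y ≤ c * (c⁻¹ * q (c • y)) := by gcongr
      _ = q (c • y) := by field_simp
  have hq0 : 0 ≤ q 0 := by
    have := hq_add 0 0
    rw [add_zero] at this
    linarith
  obtain ⟨g, -, hg⟩ := exists_extension_of_le_sublinear ⟨⊥, 0⟩ q hq_smul' hq_add (by
    rintro ⟨x, hx⟩
    rw [Submodule.mem_bot] at hx
    subst hx
    simpa using hq0)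
  exact ⟨g, hg⟩

/-- The Mazur–Orlicz sandwich theorem, relative to a linear map `T`. -/
theorem exists_linearMap_sandwich (T : E →ₗ[ℝ] F) {p : F → ℝ}
    (hp_add : ∀ x y, p (x + y) ≤ p x + p y) (hp_smul : ∀ c : ℝ, 0 < c → ∀ x, p (c • x) ≤ c * p x)
    (K : PointedCone ℝ E) {ψ : E → ℝ}
    (hψ_add : ∀ x ∈ K, ∀ y ∈ K, ψ x + ψ y ≤ ψ (x + y))
    (hψ_smul : ∀ c : ℝ, 0 < c → ∀ x ∈ K, c * ψ x ≤ ψ (c • x))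
    (hψp : ∀ x ∈ K, ψ x ≤ p (T x)) :
    ∃ g : F →ₗ[ℝ] ℝ, (∀ y, g y ≤ p y) ∧ ∀ x ∈ K, ψ x ≤ g (T x) := by
  have hp0 : p 0 ≤ 0 := by
    have := hp_smul (1 / 2) (by norm_num) 0
    rw [smul_zero] at this
    linarith
  have hψ0 : 0 ≤ ψ 0 := by
    have := hψ_smul (1 / 2) (by norm_num) 0 K.zero_mem
    rw [smul_zero] at this
    linarith
  set q : F → ℝ := fun y => ⨅ k : K, (p (y + T k) - ψ k)
  have hbdd : ∀ y, BddBelow (Set.range fun k : K => p (y + T k) - ψ k) := by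
    refine fun y => ⟨-p (-y), ?_⟩
    rintro _ ⟨k, rfl⟩
    have h₁ := hp_add (y + T k) (-y)
    rw [add_neg_cancel_comm] at h₁
    linarith [hψp k k.2]
  have hq_le : ∀ y, ∀ k ∈ K, q y ≤ p (y + T k) - ψ k := fun y k hk => ciInf_le (hbdd y) ⟨k, hk⟩
  have hq_add : ∀ x y, q (x + y) ≤ q x + q y := by
    refine fun x y => le_ciInf_add_ciInf fun k l => ?_
    refine (hq_le _ _ (K.add_mem k.2 l.2)).trans ?_
    have := hp_add (x + T k) (y + T l)
    have := hψ_add k k.2 l l.2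
    rw [map_add, add_add_add_comm]
    linarith
  have hq_smul : ∀ c : ℝ, 0 < c → ∀ y, q (c • y) ≤ c * q y := by
    intro c hc y
    rw [Real.mul_iInf_of_nonneg hc.le]
    refine le_ciInf fun k => (hq_le _ _ (K.smul_mem hc.le k.2)).trans ?_
    have := hp_smul c hc (y + T k)
    have := hψ_smul c hc k k.2
    rw [map_smul, ← smul_add]
    linarith
  obtain ⟨g, hg⟩ := exists_linearMap_le_of_sublinear hq_add hq_smul
  refine ⟨g, fun y => ?_, fun x hx => ?_⟩
  · have := (hg y).trans (hq_le y 0 K.zero_mem)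
    rw [map_zero, add_zero] at this
    linarith
  · have := (hg (-T x)).trans (hq_le _ x hx)
    rw [neg_add_cancel, map_neg] at this
    linarith

end Sandwich

section PositiveFunctionals

variable {Z : Type*} [TopologicalSpace Z]

lemma le_norm_smul_one (k : Z →ᵇ ℝ) : k ≤ ‖k‖ • 1 := fun x => by
  simpa using (le_abs_self (k x)).trans (k.norm_coe_le_norm x)

lemma norm_apply_le_of_nonneg {g : (Z →ᵇ ℝ) →ₗ[ℝ] ℝ} (hg : ∀ k, 0 ≤ k → 0 ≤ g k) (k : Z →ᵇ ℝ) :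
    ‖g k‖ ≤ g 1 * ‖k‖ := by
  have upper : ∀ k : Z →ᵇ ℝ, g k ≤ g 1 * ‖k‖ := fun k => by
    have := hg _ (sub_nonneg.2 (le_norm_smul_one k))
    rw [map_sub, map_smul, smul_eq_mul] at this
    linarith
  have := upper (-k)
  rw [map_neg, norm_neg] at this
  rw [Real.norm_eq_abs, abs_le]
  constructor <;> linarith [upper k]

lemma apply_one_le_norm (ζ : StrongDual ℝ (Z →ᵇ ℝ)) : ζ 1 ≤ ‖ζ‖ :=
  calc ζ 1 ≤ ‖ζ‖ * ‖(1 : Z →ᵇ ℝ)‖ := (le_abs_self _).trans (ζ.le_opNorm 1)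
    _ ≤ ‖ζ‖ := mul_le_of_le_one_right (norm_nonneg ζ) ((norm_le zero_le_one).2 fun _ => by simp)

def IsPos (ζ : StrongDual ℝ (Z →ᵇ ℝ)) : Prop := ∀ k, 0 ≤ k → 0 ≤ ζ k

namespace IsPos

variable {ζ ζ' : StrongDual ℝ (Z →ᵇ ℝ)}

lemma mono (hζ : IsPos ζ) {k l : Z →ᵇ ℝ} (h : k ≤ l) : ζ k ≤ ζ l := by
  simpa using hζ (l - k) (sub_nonneg.2 h)

lemma one_nonneg (hζ : IsPos ζ) : 0 ≤ ζ 1 := hζ 1 fun _ => zero_le_one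

lemma norm_le (hζ : IsPos ζ) : ‖ζ‖ ≤ ζ 1 :=
  ContinuousLinearMap.opNorm_le_bound _ hζ.one_nonneg
    (norm_apply_le_of_nonneg (g := ζ.toLinearMap) hζ)

lemma add (hζ : IsPos ζ) (hζ' : IsPos ζ') : IsPos (ζ + ζ') := fun k hk =>
  add_nonneg (hζ k hk) (hζ' k hk)

lemma smul (hζ : IsPos ζ) {c : ℝ} (hc : 0 ≤ c) : IsPos (c • ζ) := fun k hk =>
  mul_nonneg hc (hζ k hk)

end IsPos

variable (Z) in
def posCone : PointedCone ℝ (StrongDual ℝ (Z →ᵇ ℝ)) where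
  carrier := {ζ | IsPos ζ}
  zero_mem' _ _ := le_rfl
  add_mem' := IsPos.add
  smul_mem' c _ hζ := hζ.smul c.2

end PositiveFunctionals

section Meet

variable {Z : Type*} [TopologicalSpace Z] {P₁ P₂ : StrongDual ℝ (Z →ᵇ ℝ)}

/-- `(P₁ ⊓ P₂) k⁺`, by the Riesz–Kantorovich formula. -/
def infConv (P₁ P₂ : StrongDual ℝ (Z →ᵇ ℝ)) (k : Z →ᵇ ℝ) : ℝ :=
  sInf {r | ∃ k₁ k₂ : Z →ᵇ ℝ, 0 ≤ k₁ ∧ 0 ≤ k₂ ∧ k ≤ k₁ + k₂ ∧ P₁ k₁ + P₂ k₂ = r}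

lemma infConv_le (h₁ : IsPos P₁) (h₂ : IsPos P₂) {k k₁ k₂ : Z →ᵇ ℝ} (hk₁ : 0 ≤ k₁) (hk₂ : 0 ≤ k₂)
    (hk : k ≤ k₁ + k₂) : infConv P₁ P₂ k ≤ P₁ k₁ + P₂ k₂ := by
  refine csInf_le ⟨0, ?_⟩ ⟨k₁, k₂, hk₁, hk₂, hk, rfl⟩
  rintro _ ⟨l₁, l₂, hl₁, hl₂, -, rfl⟩
  exact add_nonneg (h₁ l₁ hl₁) (h₂ l₂ hl₂)

lemma le_infConv {k : Z →ᵇ ℝ} {r : ℝ}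
    (h : ∀ k₁ k₂, 0 ≤ k₁ → 0 ≤ k₂ → k ≤ k₁ + k₂ → r ≤ P₁ k₁ + P₂ k₂) : r ≤ infConv P₁ P₂ k := by
  refine le_csInf ⟨_, k⁺, 0, posPart_nonneg k, le_rfl, by simpa using le_posPart k, rfl⟩ ?_
  rintro _ ⟨k₁, k₂, hk₁, hk₂, hk, rfl⟩
  exact h k₁ k₂ hk₁ hk₂ hk

lemma infConv_add_le (h₁ : IsPos P₁) (h₂ : IsPos P₂) (k l : Z →ᵇ ℝ) :
    infConv P₁ P₂ (k + l) ≤ infConv P₁ P₂ k + infConv P₁ P₂ l := by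
  suffices ∀ k₁ k₂, 0 ≤ k₁ → 0 ≤ k₂ → k ≤ k₁ + k₂ →
      infConv P₁ P₂ (k + l) - infConv P₁ P₂ l ≤ P₁ k₁ + P₂ k₂ by
    linarith [le_infConv this]
  intro k₁ k₂ hk₁ hk₂ hk
  rw [sub_le_iff_le_add', ← sub_le_iff_le_add]
  refine le_infConv fun l₁ l₂ hl₁ hl₂ hl => ?_
  have hkl : k + l ≤ (k₁ + l₁) + (k₂ + l₂) := by
    calc k + l ≤ (k₁ + k₂) + (l₁ + l₂) := add_le_add hk hl
      _ = (k₁ + l₁) + (k₂ + l₂) := by abel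
  have := infConv_le h₁ h₂ (add_nonneg hk₁ hl₁) (add_nonneg hk₂ hl₂) hkl
  rw [map_add, map_add] at this
  linarith

lemma infConv_smul_le (h₁ : IsPos P₁) (h₂ : IsPos P₂) {c : ℝ} (hc : 0 < c) (k : Z →ᵇ ℝ) :
    infConv P₁ P₂ (c • k) ≤ c * infConv P₁ P₂ k := by
  rw [← div_le_iff₀' hc]
  refine le_infConv fun k₁ k₂ hk₁ hk₂ hk => ?_
  have hck : c • k ≤ c • k₁ + c • k₂ := fun x => by
    simpa [mul_add] using mul_le_mul_of_nonneg_left (hk x) hc.le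
  have := infConv_le h₁ h₂ (fun x => by simpa using mul_nonneg hc.le (hk₁ x))
    (fun x => by simpa using mul_nonneg hc.le (hk₂ x)) hck
  rw [map_smul, map_smul, smul_eq_mul, smul_eq_mul, ← mul_add] at this
  rwa [div_le_iff₀' hc]

lemma sub_norm_le_two_mul_infConv_one (h₁ : IsPos P₁) (h₂ : IsPos P₂) :
    P₁ 1 + P₂ 1 - ‖P₁ - P₂‖ ≤ 2 * infConv P₁ P₂ 1 := by
  suffices (P₁ 1 + P₂ 1 - ‖P₁ - P₂‖) / 2 ≤ infConv P₁ P₂ 1 by linarith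
  refine le_infConv fun k₁ k₂ hk₁ hk₂ hk => ?_
  -- `(u, 1 - u)` splits `1` exactly and costs no more than `(k₁, k₂)`
  set u := k₁ ⊓ 1
  have hu₀ : 0 ≤ u := le_inf hk₁ fun _ => zero_le_one
  have hu₁ : u ≤ 1 := inf_le_right
  have hu₂ : 1 - u ≤ k₂ := fun x => by
    have h₁x : 1 ≤ k₁ x + k₂ x := hk x
    have h₂x : 0 ≤ k₂ x := hk₂ x
    change 1 - min (k₁ x) 1 ≤ k₂ x
    rcases min_cases (k₁ x) 1 with ⟨h, -⟩ | ⟨h, -⟩ <;> rw [h] <;> linarith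
  have hnorm : ‖1 - (2 : ℝ) • u‖ ≤ 1 := by
    refine (norm_le zero_le_one).2 fun x => ?_
    have h₀x : 0 ≤ u x := hu₀ x
    have h₁x : u x ≤ 1 := hu₁ x
    change |1 - 2 * u x| ≤ 1
    rw [abs_le]
    constructor <;> linarith
  have hdiff : (P₁ - P₂) (1 - (2 : ℝ) • u) ≤ ‖P₁ - P₂‖ :=
    calc (P₁ - P₂) (1 - (2 : ℝ) • u) ≤ ‖P₁ - P₂‖ * ‖1 - (2 : ℝ) • u‖ :=
          (le_abs_self _).trans ((P₁ - P₂).le_opNorm _)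
      _ ≤ ‖P₁ - P₂‖ := mul_le_of_le_one_right (norm_nonneg _) hnorm
  have hexp : (P₁ - P₂) (1 - (2 : ℝ) • u) = P₁ 1 + P₂ 1 - 2 * (P₁ u + P₂ (1 - u)) := by
    simp only [_root_.sub_apply, map_sub, map_smul, smul_eq_mul]
    ring
  have := h₁.mono (inf_le_left : u ≤ k₁)
  have := h₂.mono hu₂
  linarith

theorem exists_meet_of_isPos (h₁ : IsPos P₁) (h₂ : IsPos P₂) :
    ∃ ω : StrongDual ℝ (Z →ᵇ ℝ), IsPos ω ∧ IsPos (P₁ - ω) ∧ IsPos (P₂ - ω) ∧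
      P₁ 1 + P₂ 1 - 2 * ω 1 ≤ ‖P₁ - P₂‖ := by
  set p := infConv P₁ P₂
  have hp_nonneg : ∀ k, 0 ≤ p k := fun k =>
    le_infConv fun k₁ k₂ hk₁ hk₂ _ => add_nonneg (h₁ k₁ hk₁) (h₂ k₂ hk₂)
  have hp_smul : ∀ c : ℝ, 0 < c → ∀ k, p (c • k) ≤ c * p k := fun c hc => infConv_smul_le h₁ h₂ hc
  have hψp : ∀ c : ℝ, c * p 1 ≤ p (c • 1) := by
    intro c
    rcases le_or_gt c 0 with hc | hc
    · exact (mul_nonpos_of_nonpos_of_nonneg hc (hp_nonneg 1)).trans (hp_nonneg _)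
    · have := hp_smul c⁻¹ (inv_pos.2 hc) (c • 1)
      rw [inv_smul_smul₀ hc.ne'] at this
      calc c * p 1 ≤ c * (c⁻¹ * p (c • 1)) := by gcongr
        _ = p (c • 1) := by field_simp
  -- a linear `g ≤ infConv P₁ P₂` with `g 1 ≥ infConv P₁ P₂ 1`
  obtain ⟨g, hgp, hg1⟩ := exists_linearMap_sandwich (LinearMap.toSpanSingleton ℝ _ 1)
    (infConv_add_le h₁ h₂) hp_smul ⊤ (ψ := fun c => c * p 1)
    (fun _ _ _ _ => (add_mul _ _ _).ge) (fun c _ x _ => by rw [smul_eq_mul, mul_assoc])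
    (fun c _ => hψp c)
  have hg_nonneg : ∀ k, 0 ≤ k → 0 ≤ g k := fun k hk => by
    have := (hgp (-k)).trans (infConv_le h₁ h₂ le_rfl le_rfl (by simpa using hk))
    simp only [map_neg, map_zero, add_zero] at this
    linarith
  refine ⟨g.mkContinuous (g 1) (norm_apply_le_of_nonneg hg_nonneg), hg_nonneg,
    fun k hk => ?_, fun k hk => ?_, ?_⟩
  · have := (hgp k).trans (infConv_le h₁ h₂ hk le_rfl (add_zero k).ge)
    rw [map_zero, add_zero] at this
    exact sub_nonneg.2 this
  · have := (hgp k).trans (infConv_le h₁ h₂ le_rfl hk (zero_add k).ge)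
    rw [map_zero, zero_add] at this
    exact sub_nonneg.2 this
  · have := hg1 1 Submodule.mem_top
    simp only [LinearMap.toSpanSingleton_apply, one_smul, one_mul] at this
    have := sub_norm_le_two_mul_infConv_one h₁ h₂
    simp only [LinearMap.mkContinuous_apply]
    linarith

end Meet

section Truncation

variable {Z : Type*} [TopologicalSpace Z] {ψ : StrongDual ℝ (Z →ᵇ ℝ) → ℝ}
  {lam : StrongDual ℝ (Z →ᵇ ℝ)} {C : ℝ}

variable (hlam : IsPos lam) (hlam1 : lam 1 = 1)
  (hadd : ∀ ζ₁ ζ₂, IsPos ζ₁ → IsPos ζ₂ → ψ (ζ₁ + ζ₂) = ψ ζ₁ + ψ ζ₂)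
  (hsmul : ∀ c : ℝ, 0 < c → ∀ ζ, IsPos ζ → ψ (c • ζ) = c * ψ ζ)
  (hbound : ∀ ζ, IsPos ζ → |ψ ζ| ≤ C * ζ 1) (hψlam : ψ lam ≤ 0)
include hlam hlam1 hadd hsmul hbound hψlam

lemma le_mul_norm_sub_smul {ρ : StrongDual ℝ (Z →ᵇ ℝ)} (hρ : IsPos ρ) (t : ℝ) :
    ψ ρ ≤ C * ‖ρ - t • lam‖ := by
  have hC : 0 ≤ C := by simpa [hlam1] using (abs_nonneg _).trans (hbound lam hlam)
  have hmass := apply_one_le_norm (ρ - t • lam)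
  simp only [_root_.sub_apply, _root_.smul_apply, hlam1, smul_eq_mul, mul_one] at hmass
  rcases le_or_gt t 0 with ht | ht
  · calc ψ ρ ≤ C * ρ 1 := (le_abs_self _).trans (hbound ρ hρ)
      _ ≤ C * ‖ρ - t • lam‖ := by gcongr; linarith
  obtain ⟨ω, hω, hρω, htω, hmeet⟩ := exists_meet_of_isPos hρ (hlam.smul ht.le)
  simp only [_root_.smul_apply, hlam1, smul_eq_mul, mul_one] at hmeet
  have hsplitρ : ψ ρ = ψ ω + ψ (ρ - ω) := by rw [← hadd _ _ hω hρω, add_sub_cancel]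
  have hsplitLam : t * ψ lam = ψ ω + ψ (t • lam - ω) := by
    rw [← hsmul t ht lam hlam, ← hadd _ _ hω htω, add_sub_cancel]
  have h₁ := (le_abs_self _).trans (hbound _ hρω)
  have h₂ := (neg_le_abs _).trans (hbound _ htω)
  simp only [_root_.sub_apply, _root_.smul_apply, hlam1, smul_eq_mul, mul_one] at h₁ h₂
  have : t * ψ lam ≤ 0 := mul_nonpos_of_nonneg_of_nonpos ht.le hψlam
  calc ψ ρ = ψ (ρ - ω) + t * ψ lam - ψ (t • lam - ω) := by linarith
    _ ≤ C * (ρ 1 + t - 2 * ω 1) := by linarith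
    _ ≤ C * ‖ρ - t • lam‖ := by gcongr

theorem exists_bidual_ge_of_additive :
    ∃ c : StrongDual ℝ (StrongDual ℝ (Z →ᵇ ℝ)), ‖c‖ ≤ C ∧ c lam = 0 ∧
      ∀ ζ, IsPos ζ → ψ ζ ≤ c ζ := by
  have hC : 0 ≤ C := by simpa [hlam1] using (abs_nonneg _).trans (hbound lam hlam)
  set p : StrongDual ℝ (Z →ᵇ ℝ) → ℝ := fun ζ => ⨅ t : ℝ, C * ‖ζ - t • lam‖
  have hp_le : ∀ ζ t, p ζ ≤ C * ‖ζ - t • lam‖ := fun ζ t =>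
    ciInf_le ⟨0, by rintro _ ⟨t, rfl⟩; positivity⟩ t
  have hp_add : ∀ ζ₁ ζ₂, p (ζ₁ + ζ₂) ≤ p ζ₁ + p ζ₂ := by
    refine fun ζ₁ ζ₂ => le_ciInf_add_ciInf fun t₁ t₂ => (hp_le _ (t₁ + t₂)).trans ?_
    rw [← mul_add]
    gcongr
    calc ‖ζ₁ + ζ₂ - (t₁ + t₂) • lam‖ = ‖(ζ₁ - t₁ • lam) + (ζ₂ - t₂ • lam)‖ := by
          rw [add_smul]; abel_nf
      _ ≤ _ := norm_add_le _ _
  have hp_smul : ∀ c : ℝ, 0 < c → ∀ ζ, p (c • ζ) ≤ c * p ζ := by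
    intro c hc ζ
    rw [Real.mul_iInf_of_nonneg hc.le]
    refine le_ciInf fun t => (hp_le _ (c * t)).trans_eq ?_
    have : c • ζ - (c * t) • lam = c • (ζ - t • lam) := by module
    rw [this, norm_smul, Real.norm_of_nonneg hc.le]
    ring
  obtain ⟨g, hgp, hψg⟩ := exists_linearMap_sandwich LinearMap.id hp_add hp_smul (posCone Z)
    (fun ζ₁ h₁ ζ₂ h₂ => (hadd ζ₁ ζ₂ h₁ h₂).ge) (fun c hc ζ hζ => (hsmul c hc ζ hζ).ge)
    (fun ρ hρ => le_ciInf
      (le_mul_norm_sub_smul hlam hlam1 hadd hsmul hbound hψlam hρ))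
  have hg_le : ∀ ζ, g ζ ≤ C * ‖ζ‖ := fun ζ => by simpa using (hgp ζ).trans (hp_le ζ 0)
  have hg_lam : ∀ s : ℝ, g (s • lam) ≤ 0 := fun s => by
    simpa using (hgp (s • lam)).trans (hp_le _ s)
  refine ⟨g.mkContinuous C fun ζ => ?_, LinearMap.mkContinuous_norm_le _ hC _, ?_, hψg⟩
  · have := hg_le (-ζ)
    rw [map_neg, norm_neg] at this
    rw [Real.norm_eq_abs, abs_le]
    constructor <;> linarith [hg_le ζ]
  · have h₁ : g lam ≤ 0 := by simpa using hg_lam 1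
    have h₂ : g (-lam) ≤ 0 := by simpa using hg_lam (-1)
    change g lam = 0
    rw [map_neg] at h₂
    linarith

end Truncation

section LatticeHom

variable {Z W : Type*} [TopologicalSpace Z] [TopologicalSpace W]

lemma posPart_add_le {α : Type*} [Lattice α] [AddCommGroup α] [IsOrderedAddMonoid α] (a b : α) :
    (a + b)⁺ ≤ a⁺ + b⁺ :=
  sup_le (add_le_add (le_posPart a) (le_posPart b))
    (add_nonneg (posPart_nonneg a) (posPart_nonneg b))

lemma BoundedContinuousFunction.posPart_smul {c : ℝ} (hc : 0 ≤ c) (f : Z →ᵇ ℝ) :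
    (c • f)⁺ = c • f⁺ := by
  ext x
  simp [posPart, mul_max_of_nonneg _ _ hc]

structure IsUnitalLatticeHom (e : (Z →ᵇ ℝ) →L[ℝ] (W →ᵇ ℝ)) : Prop where
  map_one : e 1 = 1
  map_posPart : ∀ h, e h⁺ = (e h)⁺

namespace IsUnitalLatticeHom

variable {e : (Z →ᵇ ℝ) →L[ℝ] (W →ᵇ ℝ)} (he : IsUnitalLatticeHom e)
include he

lemma nonneg {h : Z →ᵇ ℝ} (hh : 0 ≤ h) : 0 ≤ e h := by
  rw [← posPart_eq_self.2 hh, he.map_posPart]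
  exact posPart_nonneg _

lemma isPos_comp {η : StrongDual ℝ (W →ᵇ ℝ)} (hη : IsPos η) : IsPos (η.comp e) :=
  fun _ hh => hη _ (he.nonneg hh)

lemma comp_apply_one (η : StrongDual ℝ (W →ᵇ ℝ)) : η.comp e 1 = η 1 := by
  rw [ContinuousLinearMap.comp_apply, he.map_one]

theorem exists_isPos_comp_eq {η : StrongDual ℝ (W →ᵇ ℝ)} (hη : IsPos η)
    {ξ : StrongDual ℝ (Z →ᵇ ℝ)} (hξ : IsPos ξ) (hle : ∀ h, 0 ≤ h → ξ h ≤ η (e h)) :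
    ∃ ω : StrongDual ℝ (W →ᵇ ℝ), IsPos ω ∧ IsPos (η - ω) ∧ ω.comp e = ξ := by
  obtain ⟨g, hgp, hξg⟩ := exists_linearMap_sandwich e.toLinearMap (p := fun f => η f⁺)
    (fun f f' => by simpa only [map_add] using hη.mono (posPart_add_le f f'))
    (fun c hc f => by simp [BoundedContinuousFunction.posPart_smul hc.le])
    ⊤ (ψ := ξ) (fun _ _ _ _ => (map_add ξ _ _).ge) (fun _ _ _ _ => (map_smul ξ _ _).ge)
    (fun h _ => (hξ.mono (le_posPart h)).trans
      (by rw [ContinuousLinearMap.coe_coe, ← he.map_posPart]; exact hle _ (posPart_nonneg h)))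
  have hg_nonneg : ∀ f, 0 ≤ f → 0 ≤ g f := fun f hf => by
    have := hgp (-f)
    rw [posPart_eq_zero.2 (neg_nonpos.2 hf), map_zero, map_neg] at this
    linarith
  refine ⟨g.mkContinuous (g 1) (norm_apply_le_of_nonneg hg_nonneg), hg_nonneg, fun f hf => ?_, ?_⟩
  · have := hgp f
    rw [posPart_eq_self.2 hf] at this
    exact sub_nonneg.2 this
  · ext h
    have h₁ := hξg h Submodule.mem_top
    have h₂ := hξg (-h) Submodule.mem_top
    simp only [map_neg, ContinuousLinearMap.coe_coe] at h₁ h₂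
    refine le_antisymm ?_ h₁
    simp only [ContinuousLinearMap.comp_apply, LinearMap.mkContinuous_apply]
    linarith

end IsUnitalLatticeHom

end LatticeHom

section FiberSup

variable {Z W : Type*} [TopologicalSpace Z] [TopologicalSpace W]
  {e : (Z →ᵇ ℝ) →L[ℝ] (W →ᵇ ℝ)} {F : StrongDual ℝ (StrongDual ℝ (W →ᵇ ℝ))}

def fiberSup (e : (Z →ᵇ ℝ) →L[ℝ] (W →ᵇ ℝ)) (F : StrongDual ℝ (StrongDual ℝ (W →ᵇ ℝ)))
    (ξ : StrongDual ℝ (Z →ᵇ ℝ)) : ℝ :=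
  ⨆ η : {η : StrongDual ℝ (W →ᵇ ℝ) // IsPos η ∧ η.comp e = ξ}, F η

variable {B : ℝ} (he : IsUnitalLatticeHom e) (hF : ∀ η, IsPos η → F η ≤ B * η 1)
  (hfiber : ∀ ξ, IsPos ξ → ∃ η, IsPos η ∧ η.comp e = ξ)

include he hF in
lemma le_fiberSup {η : StrongDual ℝ (W →ᵇ ℝ)} (hη : IsPos η) : F η ≤ fiberSup e F (η.comp e) := by
  refine le_ciSup (f := fun η' : {η' // IsPos η' ∧ η'.comp e = η.comp e} => F η') ?_ ⟨η, hη, rfl⟩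
  refine ⟨B * η 1, ?_⟩
  rintro _ ⟨⟨η', hη', hη'e⟩, rfl⟩
  have := congrArg (fun ξ : StrongDual ℝ (Z →ᵇ ℝ) => ξ 1) hη'e
  simp only [he.comp_apply_one] at this
  simpa [this] using hF η' hη'

include hfiber in
lemma fiberSup_le {ξ : StrongDual ℝ (Z →ᵇ ℝ)} (hξ : IsPos ξ) {r : ℝ}
    (h : ∀ η, IsPos η → η.comp e = ξ → F η ≤ r) : fiberSup e F ξ ≤ r := by
  obtain ⟨η, hη, hηe⟩ := hfiber ξ hξ
  have : Nonempty {η : StrongDual ℝ (W →ᵇ ℝ) // IsPos η ∧ η.comp e = ξ} := ⟨⟨η, hη, hηe⟩⟩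
  exact ciSup_le fun η => h η η.2.1 η.2.2

include he hF hfiber

lemma fiberSup_add {ξ₁ ξ₂ : StrongDual ℝ (Z →ᵇ ℝ)} (h₁ : IsPos ξ₁) (h₂ : IsPos ξ₂) :
    fiberSup e F (ξ₁ + ξ₂) = fiberSup e F ξ₁ + fiberSup e F ξ₂ := by
  refine le_antisymm (fiberSup_le hfiber (h₁.add h₂) fun η hη hηe => ?_) ?_
  · obtain ⟨ω, hω, hηω, hωe⟩ := he.exists_isPos_comp_eq hη h₁ fun h hh => by
      rw [← ContinuousLinearMap.comp_apply, hηe, _root_.add_apply]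
      linarith [h₂ h hh]
    have hrest : (η - ω).comp e = ξ₂ := by
      rw [ContinuousLinearMap.sub_comp, hηe, hωe, add_sub_cancel_left]
    calc F η = F ω + F (η - ω) := by rw [← map_add, add_sub_cancel]
      _ ≤ fiberSup e F ξ₁ + fiberSup e F ξ₂ := by
        rw [← hωe, ← hrest]
        exact add_le_add (le_fiberSup he hF hω) (le_fiberSup he hF hηω)
  · obtain ⟨η₁, hη₁, hη₁e⟩ := hfiber ξ₁ h₁
    obtain ⟨η₂, hη₂, hη₂e⟩ := hfiber ξ₂ h₂
    have : Nonempty {η : StrongDual ℝ (W →ᵇ ℝ) // IsPos η ∧ η.comp e = ξ₁} := ⟨⟨η₁, hη₁, hη₁e⟩⟩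
    have : Nonempty {η : StrongDual ℝ (W →ᵇ ℝ) // IsPos η ∧ η.comp e = ξ₂} := ⟨⟨η₂, hη₂, hη₂e⟩⟩
    refine ciSup_add_ciSup_le fun η₁ η₂ => ?_
    have := le_fiberSup he hF (η₁.2.1.add η₂.2.1)
    rwa [map_add, ContinuousLinearMap.add_comp, η₁.2.2, η₂.2.2] at this

lemma fiberSup_smul {c : ℝ} (hc : 0 < c) {ξ : StrongDual ℝ (Z →ᵇ ℝ)} (hξ : IsPos ξ) :
    fiberSup e F (c • ξ) = c * fiberSup e F ξ := by
  refine le_antisymm (fiberSup_le hfiber (hξ.smul hc.le) fun η hη hηe => ?_) ?_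
  · have hη' : (c⁻¹ • η).comp e = ξ := by
      rw [ContinuousLinearMap.smul_comp, hηe, inv_smul_smul₀ hc.ne']
    have := le_fiberSup he hF (hη.smul (inv_nonneg.2 hc.le))
    rw [hη', map_smul, smul_eq_mul] at this
    calc F η = c * (c⁻¹ * F η) := by field_simp
      _ ≤ c * fiberSup e F ξ := by gcongr
  · rw [← le_div_iff₀' hc]
    refine fiberSup_le hfiber hξ fun η hη hηe => ?_
    have := le_fiberSup he hF (hη.smul hc.le)
    rw [map_smul, smul_eq_mul, ContinuousLinearMap.smul_comp, hηe] at this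
    rwa [le_div_iff₀' hc]

end FiberSup

section Averaging

variable {W Z Z' : Type*} [TopologicalSpace W] [TopologicalSpace Z] [TopologicalSpace Z']

lemma norm_le_one_of_nonneg_of_map_one {T : (Z →ᵇ ℝ) →L[ℝ] (W →ᵇ ℝ)}
    (hT : ∀ f, 0 ≤ f → 0 ≤ T f) (hT1 : T 1 = 1) : ‖T‖ ≤ 1 := by
  refine ContinuousLinearMap.opNorm_le_bound _ zero_le_one fun f => ?_
  rw [one_mul]
  refine (norm_le (norm_nonneg f)).2 fun x => ?_
  have upper : ∀ f : Z →ᵇ ℝ, T f x ≤ ‖f‖ := fun f => by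
    have := hT _ (sub_nonneg.2 (le_norm_smul_one f)) x
    simpa [hT1] using this
  have := upper (-f)
  rw [map_neg, norm_neg, coe_neg, Pi.neg_apply] at this
  rw [Real.norm_eq_abs, abs_le]
  constructor <;> linarith [upper f]

lemma IsUnitalLatticeHom.norm_le_one {e : (Z →ᵇ ℝ) →L[ℝ] (W →ᵇ ℝ)} (he : IsUnitalLatticeHom e) :
    ‖e‖ ≤ 1 :=
  norm_le_one_of_nonneg_of_map_one (fun _ => he.nonneg) he.map_one

lemma norm_comp_precomp_le {e : (Z →ᵇ ℝ) →L[ℝ] (W →ᵇ ℝ)} (he : ‖e‖ ≤ 1)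
    (b : StrongDual ℝ (StrongDual ℝ (Z →ᵇ ℝ))) :
    ‖b.comp (ContinuousLinearMap.precomp ℝ e)‖ ≤ ‖b‖ := by
  refine ContinuousLinearMap.opNorm_le_bound _ (norm_nonneg b) fun η => ?_
  calc ‖b (η.comp e)‖ ≤ ‖b‖ * ‖η.comp e‖ := b.le_opNorm _
    _ ≤ ‖b‖ * (‖η‖ * ‖e‖) := by gcongr; exact η.opNorm_comp_le e
    _ ≤ ‖b‖ * ‖η‖ := by gcongr; exact mul_le_of_le_one_right (norm_nonneg η) he

lemma abs_apply_le_of_isPos {a : StrongDual ℝ (StrongDual ℝ (W →ᵇ ℝ))} {R : ℝ} (ha : ‖a‖ ≤ R)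
    {η : StrongDual ℝ (W →ᵇ ℝ)} (hη : IsPos η) : |a η| ≤ R * η 1 :=
  calc |a η| ≤ ‖a‖ * ‖η‖ := a.le_opNorm η
    _ ≤ R * η 1 := mul_le_mul ha hη.norm_le (norm_nonneg η) ((norm_nonneg a).trans ha)

/-- Modelled on `W = Z × Z'`, `e h (z, z') = h z`, `e' g (z, z') = g z'` and
`P f z = ∫ f (z, z') d lam' z'`. -/
structure IsAveraging (P : (W →ᵇ ℝ) →L[ℝ] (Z →ᵇ ℝ)) (e : (Z →ᵇ ℝ) →L[ℝ] (W →ᵇ ℝ))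
    (e' : (Z' →ᵇ ℝ) →L[ℝ] (W →ᵇ ℝ)) (lam' : StrongDual ℝ (Z' →ᵇ ℝ)) : Prop where
  nonneg : ∀ f, 0 ≤ f → 0 ≤ P f
  apply_self : ∀ h, P (e h) = h
  apply_other : ∀ g, P (e' g) = lam' g • 1

namespace IsAveraging

variable {P : (W →ᵇ ℝ) →L[ℝ] (Z →ᵇ ℝ)} {e : (Z →ᵇ ℝ) →L[ℝ] (W →ᵇ ℝ)}
  {e' : (Z' →ᵇ ℝ) →L[ℝ] (W →ᵇ ℝ)} {lam' : StrongDual ℝ (Z' →ᵇ ℝ)}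
  (hP : IsAveraging P e e' lam')
include hP

lemma comp_comp_self (ξ : StrongDual ℝ (Z →ᵇ ℝ)) : (ξ.comp P).comp e = ξ := by
  ext h
  simp [hP.apply_self]

lemma comp_comp_other (ξ : StrongDual ℝ (Z →ᵇ ℝ)) : (ξ.comp P).comp e' = ξ 1 • lam' := by
  ext g
  simp [hP.apply_other, mul_comm]

lemma isPos_comp {ξ : StrongDual ℝ (Z →ᵇ ℝ)} (hξ : IsPos ξ) : IsPos (ξ.comp P) :=
  fun f hf => hξ _ (hP.nonneg f hf)

lemma norm_le_one (he : IsUnitalLatticeHom e) : ‖P‖ ≤ 1 :=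
  norm_le_one_of_nonneg_of_map_one hP.nonneg (by rw [← he.map_one, hP.apply_self])

variable {a : StrongDual ℝ (StrongDual ℝ (W →ᵇ ℝ))} {b : StrongDual ℝ (StrongDual ℝ (Z →ᵇ ℝ))}
  {c : StrongDual ℝ (StrongDual ℝ (Z' →ᵇ ℝ))} {R : ℝ}

lemma neg_mul_le_apply_comp (he : IsUnitalLatticeHom e) (ha : ‖a‖ ≤ R)
    {ξ : StrongDual ℝ (Z →ᵇ ℝ)} (hξ : IsPos ξ) : -(R * ξ 1) ≤ a (ξ.comp P) := by
  have := abs_apply_le_of_isPos ha (hP.isPos_comp hξ)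
  rw [ContinuousLinearMap.comp_apply, ← he.map_one, hP.apply_self] at this
  exact neg_le_of_abs_le this

lemma norm_comp_precomp_le_of_eq_add (he : IsUnitalLatticeHom e) (hc : c lam' = 0)
    (habc : ∀ η, a η = b (η.comp e) + c (η.comp e')) :
    ‖b.comp (ContinuousLinearMap.precomp ℝ e)‖ ≤ ‖a‖ := by
  -- `ξ ∘ P` has marginals `ξ` and `ξ 1 • lam'`, and `c` vanishes on the latter
  have hb : ∀ ξ, b ξ = a (ξ.comp P) := fun ξ => by
    rw [habc, hP.comp_comp_self, hP.comp_comp_other, map_smul, hc, smul_zero, add_zero]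
  refine ContinuousLinearMap.opNorm_le_bound _ (norm_nonneg a) fun η => ?_
  calc ‖b (η.comp e)‖ = ‖a ((η.comp e).comp P)‖ := by rw [hb]
    _ ≤ ‖a‖ * ‖η‖ := by
      refine (a.le_opNorm _).trans (mul_le_mul_of_nonneg_left ?_ (norm_nonneg a))
      calc ‖(η.comp e).comp P‖ ≤ ‖η‖ * ‖e‖ * ‖P‖ :=
            ((η.comp e).opNorm_comp_le P).trans (by gcongr; exact η.opNorm_comp_le e)
        _ ≤ ‖η‖ := by
          rw [mul_assoc]
          exact mul_le_of_le_one_right (norm_nonneg η)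
            (mul_le_one₀ he.norm_le_one (norm_nonneg P) (hP.norm_le_one he))

lemma neg_mul_le_of_le_add (he : IsUnitalLatticeHom e) (ha : ‖a‖ ≤ R) (hc : c lam' = 0)
    (habc : ∀ η, IsPos η → a η ≤ b (η.comp e) + c (η.comp e'))
    {ξ : StrongDual ℝ (Z →ᵇ ℝ)} (hξ : IsPos ξ) : -(R * ξ 1) ≤ b ξ := by
  have := habc _ (hP.isPos_comp hξ)
  rw [hP.comp_comp_self, hP.comp_comp_other, map_smul, hc, smul_zero, add_zero] at this
  exact (hP.neg_mul_le_apply_comp he ha hξ).trans this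

end IsAveraging

end Averaging

section Step

variable {W Z Z' : Type*} [TopologicalSpace W] [TopologicalSpace Z] [TopologicalSpace Z']
  {e : (Z →ᵇ ℝ) →L[ℝ] (W →ᵇ ℝ)} {e' : (Z' →ᵇ ℝ) →L[ℝ] (W →ᵇ ℝ)}
  {P : (W →ᵇ ℝ) →L[ℝ] (Z →ᵇ ℝ)} {P' : (W →ᵇ ℝ) →L[ℝ] (Z' →ᵇ ℝ)}
  {lam : StrongDual ℝ (Z →ᵇ ℝ)} {lam' : StrongDual ℝ (Z' →ᵇ ℝ)}

theorem exists_bounded_right_of_le_add (he : IsUnitalLatticeHom e) (he' : IsUnitalLatticeHom e')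
    (hP : IsAveraging P e e' lam') (hP' : IsAveraging P' e' e lam)
    (hlam' : IsPos lam') (hlam'1 : lam' 1 = 1)
    {R : ℝ} {a : StrongDual ℝ (StrongDual ℝ (W →ᵇ ℝ))} (ha : ‖a‖ ≤ R)
    {b : StrongDual ℝ (StrongDual ℝ (Z →ᵇ ℝ))} (hb : b lam = 0)
    {c : StrongDual ℝ (StrongDual ℝ (Z' →ᵇ ℝ))} (hc : c lam' = 0)
    (habc : ∀ η, IsPos η → a η ≤ b (η.comp e) + c (η.comp e')) :
    ∃ c' : StrongDual ℝ (StrongDual ℝ (Z' →ᵇ ℝ)), ‖c'‖ ≤ 2 * R ∧ c' lam' = 0 ∧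
      ∀ η, IsPos η → a η ≤ b (η.comp e) + c' (η.comp e') := by
  set F := a - b.comp (ContinuousLinearMap.precomp ℝ e)
  have hF_apply : ∀ η, F η = a η - b (η.comp e) := fun _ => rfl
  have hb_ge : ∀ ξ, IsPos ξ → -(R * ξ 1) ≤ b ξ := fun _ => hP.neg_mul_le_of_le_add he ha hc habc
  have hF : ∀ η, IsPos η → F η ≤ 2 * R * η 1 := fun η hη => by
    have := hb_ge _ (he.isPos_comp hη)
    rw [he.comp_apply_one] at this
    linarith [le_of_abs_le (abs_apply_le_of_isPos ha hη), hF_apply η]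
  have hfiber : ∀ ζ, IsPos ζ → ∃ η, IsPos η ∧ η.comp e' = ζ := fun ζ hζ =>
    ⟨ζ.comp P', hP'.isPos_comp hζ, hP'.comp_comp_self ζ⟩
  set ψ := fiberSup e' F
  have hψ_ge : ∀ ζ, IsPos ζ → -(R * ζ 1) ≤ ψ ζ := fun ζ hζ => by
    have := le_fiberSup he' hF (hP'.isPos_comp hζ)
    rw [hF_apply, hP'.comp_comp_self, hP'.comp_comp_other, map_smul, hb, smul_zero,
      sub_zero] at this
    exact (hP'.neg_mul_le_apply_comp he' ha hζ).trans this
  have hψ_le : ∀ ζ, IsPos ζ → ψ ζ ≤ 2 * R * ζ 1 := fun ζ hζ =>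
    fiberSup_le hfiber hζ fun η hη hηe => by
      rw [← hηe, he'.comp_apply_one]
      exact hF η hη
  have hR : 0 ≤ R := (norm_nonneg a).trans ha
  have hψ_lam' : ψ lam' ≤ 0 := fiberSup_le hfiber hlam' fun η hη hηe => by
    have := habc η hη
    rw [hηe, hc] at this
    linarith [hF_apply η]
  obtain ⟨c', hc'_norm, hc'_lam', hψc'⟩ := exists_bidual_ge_of_additive hlam' hlam'1
    (fun ζ₁ ζ₂ h₁ h₂ => fiberSup_add he' hF hfiber h₁ h₂)
    (fun c hc ζ hζ => fiberSup_smul he' hF hfiber hc hζ)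
    (fun ζ hζ => abs_le.2 ⟨by nlinarith [hψ_ge ζ hζ, hζ.one_nonneg], hψ_le ζ hζ⟩) hψ_lam'
  refine ⟨c', hc'_norm, hc'_lam', fun η hη => ?_⟩
  have := (le_fiberSup he' hF hη).trans (hψc' _ (he'.isPos_comp hη))
  linarith [hF_apply η]

theorem exists_bounded_of_le_add (he : IsUnitalLatticeHom e) (he' : IsUnitalLatticeHom e')
    (hP : IsAveraging P e e' lam') (hP' : IsAveraging P' e' e lam)
    (hlam : IsPos lam) (hlam1 : lam 1 = 1) (hlam' : IsPos lam') (hlam'1 : lam' 1 = 1)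
    {R : ℝ} {a : StrongDual ℝ (StrongDual ℝ (W →ᵇ ℝ))} (ha : ‖a‖ ≤ R)
    {b : StrongDual ℝ (StrongDual ℝ (Z →ᵇ ℝ))} (hb : b lam = 0)
    {c : StrongDual ℝ (StrongDual ℝ (Z' →ᵇ ℝ))} (hc : c lam' = 0)
    (habc : ∀ η, IsPos η → a η ≤ b (η.comp e) + c (η.comp e')) :
    ∃ (b' : StrongDual ℝ (StrongDual ℝ (Z →ᵇ ℝ))) (c' : StrongDual ℝ (StrongDual ℝ (Z' →ᵇ ℝ))),
      ‖b'‖ ≤ 2 * R ∧ ‖c'‖ ≤ 2 * R ∧ b' lam = 0 ∧ c' lam' = 0 ∧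
        ∀ η, IsPos η → a η ≤ b' (η.comp e) + c' (η.comp e') := by
  obtain ⟨c', hc', hc'_lam', habc'⟩ :=
    exists_bounded_right_of_le_add he he' hP hP' hlam' hlam'1 ha hb hc habc
  obtain ⟨b', hb', hb'_lam, hab'c'⟩ := exists_bounded_right_of_le_add he' he hP' hP hlam hlam1 ha
    hc'_lam' hb fun η hη => (habc' η hη).trans_eq (add_comm _ _)
  exact ⟨b', c', hb', hc', hb'_lam, hc'_lam', fun η hη => (hab'c' η hη).trans_eq (add_comm _ _)⟩

end Step

section Integration

variable {A B W : Type*} [TopologicalSpace A] [TopologicalSpace B] [MeasurableSpace B]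
  [TopologicalSpace W] (ν : Measure B) [IsProbabilityMeasure ν] (φ : C(A × B, W))

lemma norm_integral_comp_prodMk_le (f : W →ᵇ ℝ) (a : A) : ‖∫ b, f (φ (a, b)) ∂ν‖ ≤ ‖f‖ := by
  simpa using norm_integral_le_of_norm_le_const (μ := ν)
    (Filter.Eventually.of_forall fun b => f.norm_coe_le_norm (φ (a, b)))

variable [OpensMeasurableSpace B]

lemma integrable_comp_prodMk (f : W →ᵇ ℝ) (a : A) : Integrable (fun b => f (φ (a, b))) ν :=
  (f.compContinuous ⟨fun b => φ (a, b), by fun_prop⟩).integrable ν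

variable [FirstCountableTopology A]

def sliceAverage : (W →ᵇ ℝ) →L[ℝ] (A →ᵇ ℝ) :=
  LinearMap.mkContinuous
    { toFun := fun f => ofNormedAddCommGroup (fun a => ∫ b, f (φ (a, b)) ∂ν)
        (continuous_of_dominated (fun a => (integrable_comp_prodMk ν φ f a).aestronglyMeasurable)
          (fun a => Filter.Eventually.of_forall fun b => f.norm_coe_le_norm (φ (a, b)))
          (integrable_const _) (Filter.Eventually.of_forall fun b => by fun_prop))
        ‖f‖ (norm_integral_comp_prodMk_le ν φ f)
      map_add' := fun f g => by
        ext a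
        exact integral_add (integrable_comp_prodMk ν φ f a) (integrable_comp_prodMk ν φ g a)
      map_smul' := fun r f => by
        ext a
        exact integral_smul r fun b => f (φ (a, b)) }
    1 fun f => by
      rw [one_mul]
      exact norm_ofNormedAddCommGroup_le _ (norm_nonneg f) (norm_integral_comp_prodMk_le ν φ f)

lemma sliceAverage_apply (f : W →ᵇ ℝ) (a : A) : sliceAverage ν φ f a = ∫ b, f (φ (a, b)) ∂ν := rfl

lemma sliceAverage_nonneg {f : W →ᵇ ℝ} (hf : 0 ≤ f) : 0 ≤ sliceAverage ν φ f := fun a =>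
  integral_nonneg fun b => hf (φ (a, b))

end Integration

section Marginals

variable {X Y : Set (EuclideanSpace ℝ (Fin d))}

lemma isPos_integrationCLM {Z : Type*} [TopologicalSpace Z] [MeasurableSpace Z]
    [OpensMeasurableSpace Z] (m : Measure Z) [IsFiniteMeasure m] : IsPos (integrationCLM m) :=
  fun _ hk => integral_nonneg hk

lemma integrationCLM_one {Z : Type*} [TopologicalSpace Z] [MeasurableSpace Z]
    [OpensMeasurableSpace Z] (m : Measure Z) [IsProbabilityMeasure m] : integrationCLM m 1 = 1 := by
  simp [integrationCLM]

lemma isUnitalLatticeHom_extX : IsUnitalLatticeHom (extX (X := X) (Y := Y)) :=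
  ⟨rfl, fun _ => rfl⟩

lemma isUnitalLatticeHom_extY : IsUnitalLatticeHom (extY (X := X) (Y := Y)) :=
  ⟨rfl, fun _ => rfl⟩

lemma isAveraging_sliceAverage_extX (ν : Measure ↥Y) [IsProbabilityMeasure ν] :
    IsAveraging (sliceAverage ν (ContinuousMap.id (↥X × ↥Y))) extX extY (integrationCLM ν) where
  nonneg _ := sliceAverage_nonneg ν _
  apply_self h := by ext x; simp [sliceAverage_apply, extX]
  apply_other g := by ext x; simp [sliceAverage_apply, extY, integrationCLM]

lemma isAveraging_sliceAverage_extY (μ : Measure ↥X) [IsProbabilityMeasure μ] :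
    IsAveraging (sliceAverage μ (ContinuousMap.prodSwap (α := ↥Y) (β := ↥X))) extY extX
      (integrationCLM μ) where
  nonneg _ := sliceAverage_nonneg μ _
  apply_self g := by ext y; simp [sliceAverage_apply, extY]
  apply_other h := by ext y; simp [sliceAverage_apply, extX, integrationCLM]

end Marginals

-- `mem_closedBall_zero_iff` does not see through the `Zero` instance of `StrongDual` in `stmt9`.
lemma mem_closedBall_zero_iff_norm_le {W : Type*} [TopologicalSpace W]
    {a : StrongDual ℝ (StrongDual ℝ (W →ᵇ ℝ))} {r : ℝ} : a ∈ Metric.closedBall 0 r ↔ ‖a‖ ≤ r := by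
  rw [Metric.mem_closedBall, dist_zero_right (E := StrongDual ℝ (StrongDual ℝ (W →ᵇ ℝ)))]

section Product

variable (X Y : Set (EuclideanSpace ℝ (Fin d))) (μ : Measure ↥X) [IsProbabilityMeasure μ]
  (ν : Measure ↥Y) [IsProbabilityMeasure ν] (R : ℝ)

theorem bmu_add_cnu_inter_closedBall_subset :
    (Bmu X Y μ + Cnu X Y ν) ∩ Metric.closedBall 0 R ⊆
      (Bmu X Y μ ∩ Metric.closedBall 0 R) + (Cnu X Y ν ∩ Metric.closedBall 0 R) := by
  rintro _ ⟨⟨a₁, ⟨b, hb, hbμ⟩, a₂, ⟨c, hc, hcν⟩, rfl⟩, ha⟩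
  rw [mem_closedBall_zero_iff_norm_le] at ha
  refine ⟨a₁, ⟨⟨b, hb, hbμ⟩, ?_⟩, a₂, ⟨⟨c, hc, hcν⟩, ?_⟩, rfl⟩ <;>
    rw [mem_closedBall_zero_iff_norm_le]
  · rw [show a₁ = b.comp (ContinuousLinearMap.precomp ℝ extX) from ContinuousLinearMap.ext hb]
    refine ((isAveraging_sliceAverage_extX ν).norm_comp_precomp_le_of_eq_add
      isUnitalLatticeHom_extX hcν fun η => ?_).trans ha
    rw [_root_.add_apply, hb, hc]
  · rw [show a₂ = c.comp (ContinuousLinearMap.precomp ℝ extY) from ContinuousLinearMap.ext hc]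
    refine ((isAveraging_sliceAverage_extY μ).norm_comp_precomp_le_of_eq_add
      isUnitalLatticeHom_extY hbμ fun η => ?_).trans ha
    rw [_root_.add_apply, hb, hc, add_comm]

theorem bmu_add_cnu_add_nneg_inter_closedBall_subset :
    (Bmu X Y μ + Cnu X Y ν + Nneg X Y) ∩ Metric.closedBall 0 R ⊆
      (Bmu X Y μ ∩ Metric.closedBall 0 (3 * R)) + (Cnu X Y ν ∩ Metric.closedBall 0 (3 * R)) +
        (Nneg X Y ∩ Metric.closedBall 0 (7 * R)) := by
  rintro _ ⟨⟨_, ⟨a₁, ⟨b, hb, hbμ⟩, a₂, ⟨c, hc, hcν⟩, rfl⟩, n, hn, rfl⟩, ha⟩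
  beta_reduce at ha ⊢
  rw [mem_closedBall_zero_iff_norm_le] at ha
  set a := a₁ + a₂ + n
  have habc : ∀ η, IsPos η → a η ≤ b (η.comp extX) + c (η.comp extY) := fun η hη => by
    have := hn η hη
    simp only [a, _root_.add_apply, hb, hc]
    linarith
  obtain ⟨b', c', hb', hc', hb'μ, hc'ν, hab'c'⟩ := exists_bounded_of_le_add
    isUnitalLatticeHom_extX isUnitalLatticeHom_extY (isAveraging_sliceAverage_extX ν)
    (isAveraging_sliceAverage_extY μ) (isPos_integrationCLM μ) (integrationCLM_one μ)
    (isPos_integrationCLM ν) (integrationCLM_one ν) ha hbμ hcν habc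
  set B := b'.comp (ContinuousLinearMap.precomp ℝ extX)
  set C := c'.comp (ContinuousLinearMap.precomp ℝ extY)
  have hB : ‖B‖ ≤ 2 * R :=
    (norm_comp_precomp_le (isUnitalLatticeHom_extX (Y := Y)).norm_le_one b').trans hb'
  have hC : ‖C‖ ≤ 2 * R :=
    (norm_comp_precomp_le (isUnitalLatticeHom_extY (X := X)).norm_le_one c').trans hc'
  have hR : 0 ≤ R := (norm_nonneg a).trans ha
  refine ⟨B + C, ⟨B, ⟨⟨b', fun _ => rfl, hb'μ⟩, ?_⟩, C, ⟨⟨c', fun _ => rfl, hc'ν⟩, ?_⟩, rfl⟩,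
    a - (B + C), ⟨fun η hη => ?_, ?_⟩, add_sub_cancel (B + C) a⟩
  · rw [mem_closedBall_zero_iff_norm_le]
    linarith
  · rw [mem_closedBall_zero_iff_norm_le]
    linarith
  · change a η - (b' (η.comp extX) + c' (η.comp extY)) ≤ 0
    linarith [hab'c' η hη]
  · rw [mem_closedBall_zero_iff_norm_le]
    have h₁ := norm_sub_le (E := StrongDual ℝ (StrongDual ℝ ((↥X × ↥Y) →ᵇ ℝ))) a (B + C)
    have h₂ := norm_add_le (E := StrongDual ℝ (StrongDual ℝ ((↥X × ↥Y) →ᵇ ℝ))) B C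
    linarith

end Product

theorem stmt9_general
    (X Y : Set (EuclideanSpace ℝ (Fin d)))
    (μ : Measure ↥X) [IsProbabilityMeasure μ]
    (ν : Measure ↥Y) [IsProbabilityMeasure ν]
    (R : ℝ) :
    (Bmu X Y μ + Cnu X Y ν) ∩ Metric.closedBall 0 R ⊆
      (Bmu X Y μ ∩ Metric.closedBall 0 R) + (Cnu X Y ν ∩ Metric.closedBall 0 R) ∧
    (Bmu X Y μ + Cnu X Y ν + Nneg X Y) ∩ Metric.closedBall 0 R ⊆
      (Bmu X Y μ ∩ Metric.closedBall 0 (3 * R)) +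
      (Cnu X Y ν ∩ Metric.closedBall 0 (3 * R)) +
      (Nneg X Y ∩ Metric.closedBall 0 (7 * R)) :=
  ⟨bmu_add_cnu_inter_closedBall_subset X Y μ ν R,
    bmu_add_cnu_add_nneg_inter_closedBall_subset X Y μ ν R⟩

theorem stmt9
    (X Y : Set (EuclideanSpace ℝ (Fin d)))
    (hXcl : IsClosed X) (hXcv : Convex ℝ X) (hYcl : IsClosed Y) (hYcv : Convex ℝ Y)
    (μ : Measure ↥X) [IsProbabilityMeasure μ]
    (ν : Measure ↥Y) [IsProbabilityMeasure ν]
    (R : ℝ) (hR : 0 < R) :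
    (Bmu X Y μ + Cnu X Y ν) ∩ Metric.closedBall 0 R ⊆
      (Bmu X Y μ ∩ Metric.closedBall 0 R) + (Cnu X Y ν ∩ Metric.closedBall 0 R) ∧
    (Bmu X Y μ + Cnu X Y ν + Nneg X Y) ∩ Metric.closedBall 0 R ⊆
      (Bmu X Y μ ∩ Metric.closedBall 0 (3 * R)) +
      (Cnu X Y ν ∩ Metric.closedBall 0 (3 * R)) +
      (Nneg X Y ∩ Metric.closedBall 0 (7 * R)) :=
  stmt9_general X Y μ ν R
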